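/- arXiv:1711.04634 — 2 statements merged into one kernel-verified Lean document; each statement's English description precedes it below -/
import Mathlib

section
/- Soundness of the rule R□ of G3S5: if the sequent M, ◇⋀(P ∪ ¬Q) ⊢ N, A is S5-valid, where M and N are multisets of formulas of the form □B or ◇B and P, Q are multisets of atomic formulas, then the sequent M, P ⊢ Q, N, □A is S5-valid. -/
inductive Formula (α : Type) : Type
  | bot : Formula α
  | top : Formula α
  | atom (p : α) : Formula α
  | neg (A : Formula α) : Formula α
  | and (A B : Formula α) : Formula α
  | or (A B : Formula α) : Formula α
  | imp (A B : Formula α) : Formula α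
  | dia (A : Formula α) : Formula α
  | box (A : Formula α) : Formula α

structure KripkeModel (α : Type) where
  W : Type
  R : W → W → Prop
  V : α → W → Prop

def Sat {α : Type} (M : KripkeModel α) : M.W → Formula α → Prop
  | _, .bot => False
  | _, .top => True
  | w, .atom p => M.V p w
  | w, .neg A => ¬ Sat M w A
  | w, .and A B => Sat M w A ∧ Sat M w B
  | w, .or A B => Sat M w A ∨ Sat M w B
  | w, .imp A B => Sat M w A → Sat M w B
  | w, .dia A => ∃ v, M.R w v ∧ Sat M v A
  | w, .box A => ∀ v, M.R w v → Sat M v A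

/-
In an S5 model a formula □B or ◇B has the same truth value at all worlds of an equivalence class.
So if w satisfies M and P but not Q, then every v accessible from w still satisfies M, and w is
a world accessible from v witnessing ◇⋀(P ∪ ¬Q); the premise yields N or A at v, and N at v
would transfer back to w. Hence A holds at every such v, i.e. □A holds at w.
-/

def Formula.IsModal {α : Type} (F : Formula α) : Prop :=
  (∃ B, F = Formula.box B) ∨ (∃ B, F = Formula.dia B)

section Equivalence

variable {α : Type} {K : KripkeModel α} (hE : Equivalence K.R) {w v : K.W}
include hE

theorem rel_iff_of_rel (hwv : K.R w v) (u : K.W) : K.R w u ↔ K.R v u :=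
  ⟨hE.trans (hE.symm hwv), hE.trans hwv⟩

theorem sat_iff_of_rel_of_isModal (hwv : K.R w v) {F : Formula α} (hF : F.IsModal) :
    Sat K w F ↔ Sat K v F := by
  rcases hF with ⟨B, rfl⟩ | ⟨B, rfl⟩ <;> simp only [Sat, rel_iff_of_rel hE hwv]

theorem forall_sat_iff_of_rel (hwv : K.R w v) {M : Multiset (Formula α)}
    (hM : ∀ F ∈ M, F.IsModal) : (∀ F ∈ M, Sat K w F) ↔ ∀ F ∈ M, Sat K v F :=
  forall₂_congr fun F hF => sat_iff_of_rel_of_isModal hE hwv (hM F hF)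

theorem exists_sat_iff_of_rel (hwv : K.R w v) {N : Multiset (Formula α)}
    (hN : ∀ F ∈ N, F.IsModal) : (∃ F ∈ N, Sat K w F) ↔ ∃ F ∈ N, Sat K v F :=
  exists_congr fun F => and_congr_right fun hF => sat_iff_of_rel_of_isModal hE hwv (hN F hF)

end Equivalence

/-- Soundness of the rule R□ of G3S5. The premise sequent `M, ◇⋀(P,¬Q) ⊢ N, A`
is stated via the Kripke satisfaction clause of `◇⋀(P,¬Q)`: there is an accessible
world where every atom of `P` holds and every atom of `Q` fails. -/
theorem rbox_sound {α : Type} (M N : Multiset (Formula α)) (P Q : Multiset α) (A : Formula α)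
    (hM : ∀ F ∈ M, (∃ B, F = Formula.box B) ∨ (∃ B, F = Formula.dia B))
    (hN : ∀ F ∈ N, (∃ B, F = Formula.box B) ∨ (∃ B, F = Formula.dia B))
    (hprem : ∀ (K : KripkeModel α), Equivalence K.R → ∀ w : K.W,
      ((∀ F ∈ M, Sat K w F) ∧
        (∃ v, K.R w v ∧ (∀ p ∈ P, K.V p v) ∧ (∀ q ∈ Q, ¬ K.V q v))) →
      ((∃ F ∈ N, Sat K w F) ∨ Sat K w A)) :
    ∀ (K : KripkeModel α), Equivalence K.R → ∀ w : K.W,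
      ((∀ F ∈ M, Sat K w F) ∧ (∀ p ∈ P, K.V p w)) →
      ((∃ q ∈ Q, K.V q w) ∨ (∃ F ∈ N, Sat K w F) ∨ Sat K w (Formula.box A)) := by
  intro K hE w ⟨hMw, hPw⟩
  rw [or_iff_not_imp_left, or_iff_not_imp_left]
  push Not
  intro hQw hNw v hwv
  have hMv := (forall_sat_iff_of_rel hE hwv hM).1 hMw
  rcases hprem K hE v ⟨hMv, w, hE.symm hwv, hPw, hQw⟩ with hNv | hAv
  · obtain ⟨F, hFN, hFw⟩ := (exists_sat_iff_of_rel hE hwv hN).2 hNv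
    exact absurd hFw (hNw F hFN)
  · exact hAv
end

section
/- Soundness of the rule L◇ of G3S5: if the sequent A, M ⊢ □⋁(¬P ∪ Q), N is S5-valid, where M and N are multisets of formulas of the form □B or ◇B and P, Q are multisets of atomic formulas, then the sequent ◇A, M, P ⊢ Q, N is S5-valid. -/
/-!
If `◇A` holds at `w`, then `A` holds at some `v` with `w R v`. In an equivalence relation `w` and
`v` see the same worlds, so formulas `□B`, `◇B` have the same truth value at both: `M` transfers
from `w` to `v`, and `N` back from `v` to `w`. Finally `v R w`, so if the premise yields
`□⋁(¬P ∪ Q)` at `v`, evaluating it at `w`, where all of `P` holds, gives an atom of `Q`.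
-/

theorem sat_modal_iff_of_rel {α : Type} {K : KripkeModel α} (hE : Equivalence K.R)
    {w v : K.W} (h : K.R w v) {F : Formula α}
    (hF : (∃ B, F = Formula.box B) ∨ (∃ B, F = Formula.dia B)) :
    Sat K w F ↔ Sat K v F := by
  have same_successors : ∀ u, K.R w u ↔ K.R v u := fun u =>
    ⟨hE.trans (hE.symm h), hE.trans h⟩
  rcases hF with ⟨B, rfl⟩ | ⟨B, rfl⟩ <;> simp only [Sat, same_successors]

/-- Soundness of the rule L◇ of G3S5. The premise sequent `A, M ⊢ □⋁(¬P,Q), N`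
is stated via the Kripke satisfaction clause of `□⋁(¬P,Q)`: at every accessible
world, some atom of `P` fails or some atom of `Q` holds. -/
theorem ldia_sound {α : Type} (M N : Multiset (Formula α)) (P Q : Multiset α) (A : Formula α)
    (hM : ∀ F ∈ M, (∃ B, F = Formula.box B) ∨ (∃ B, F = Formula.dia B))
    (hN : ∀ F ∈ N, (∃ B, F = Formula.box B) ∨ (∃ B, F = Formula.dia B))
    (hprem : ∀ (K : KripkeModel α), Equivalence K.R → ∀ w : K.W,
      (Sat K w A ∧ (∀ F ∈ M, Sat K w F)) →
      ((∀ v, K.R w v → (∃ p ∈ P, ¬ K.V p v) ∨ (∃ q ∈ Q, K.V q v)) ∨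
        (∃ F ∈ N, Sat K w F))) :
    ∀ (K : KripkeModel α), Equivalence K.R → ∀ w : K.W,
      (Sat K w (Formula.dia A) ∧ (∀ F ∈ M, Sat K w F) ∧ (∀ p ∈ P, K.V p w)) →
      ((∃ q ∈ Q, K.V q w) ∨ (∃ F ∈ N, Sat K w F)) := by
  intro K hE w ⟨⟨v, hwv, hA⟩, hMw, hP⟩
  have hMv : ∀ F ∈ M, Sat K v F := fun F hF =>
    (sat_modal_iff_of_rel hE hwv (hM F hF)).mp (hMw F hF)
  rcases hprem K hE v ⟨hA, hMv⟩ with hbox | ⟨F, hF, hFv⟩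
  · rcases hbox w (hE.symm hwv) with ⟨p, hp, hnp⟩ | hq
    · exact absurd (hP p hp) hnp
    · exact Or.inl hq
  · exact Or.inr ⟨F, hF, (sat_modal_iff_of_rel hE hwv (hN F hF)).mpr hFv⟩
end
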